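/- Let x ∈ [1,∞)⁶ and i ∈ {2,3,5,6}. If ∂φ/∂xᵢ(x) ≥ 0, then for all t, s ≥ 0 one has ∂φ/∂xᵢ(x + t·mᵢ + s·m_{î}) ≥ 0. In particular, φ(x) ≤ φ(y) for every y ∈ [1,∞)⁶ with yᵢ ≥ xᵢ and y_j = x_j for all j ≠ i. -/

import Mathlib

open Real

/-- The cosine of the dihedral angle at the edge `e₁` of a generalized hyper-ideal
tetrahedron whose edge lengths `lᵢ` satisfy `cosh lᵢ = xᵢ`. -/
noncomputable def phi (x1 x2 x3 x4 x5 x6 : ℝ) : ℝ :=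
  (x2 * x3 + x5 * x6 + x1 * x2 * x5 + x1 * x3 * x6 - x1 ^ 2 * x4 + x4) /
    (Real.sqrt (2 * x1 * x2 * x6 + x1 ^ 2 + x2 ^ 2 + x6 ^ 2 - 1) *
      Real.sqrt (2 * x1 * x3 * x5 + x1 ^ 2 + x3 ^ 2 + x5 ^ 2 - 1))

/-- `phi` as a function of a vector `x : Fin 6 → ℝ`, where `x ⟨k-1⟩` plays the
role of the coordinate `x_k`, `k = 1, …, 6`. -/
noncomputable def phiV (x : Fin 6 → ℝ) : ℝ :=
  phi (x 0) (x 1) (x 2) (x 3) (x 4) (x 5)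

/-- The partial derivative `∂φ/∂x_{i+1}` of `phiV` in the `i`-th coordinate at `x`. -/
noncomputable def pphi (i : Fin 6) (x : Fin 6 → ℝ) : ℝ :=
  deriv (fun u => phiV (Function.update x i u)) (x i)

/-- The pairing `2̂ = 5, 3̂ = 6, 5̂ = 2, 6̂ = 3` of the indices `{2,3,5,6}`; in the
`0`-based indexing of `Fin 6` the pairs are `(1,4), (2,5), (4,1), (5,2)`. -/
def IsPairedIndex (i ih : Fin 6) : Prop :=
  (i = 1 ∧ ih = 4) ∨ (i = 2 ∧ ih = 5) ∨ (i = 4 ∧ ih = 1) ∨ (i = 5 ∧ ih = 2)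

/-!
With `A = 2x₁x₂x₆ + x₁² + x₂² + x₆² − 1` and `B = 2x₁x₃x₅ + x₁² + x₃² + x₅² − 1` the two radicands,
`∂φ/∂x₂ = (x₁² − 1) g / (A^{3/2} B^{1/2})` where `g = x₃(1 − x₆²) + x₁x₅ + x₂x₅x₆ + x₂x₄ + x₁x₄x₆`.
On `[1,∞)⁶` the sign of `∂φ/∂x₂` is that of `(x₁² − 1) g`, and raising `x₂` by `t ≥ 0` and `x₅` by
`s ≥ 0` raises `g` by `x₁s + x₆(x₂s + x₅t + ts) + x₄t ≥ 0`, so nonnegativity propagates.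
The substitutions `(x₂,x₃,x₅,x₆) ↦ (x₃,x₂,x₆,x₅)` and `(x₂,x₃,x₅,x₆) ↦ (x₅,x₆,x₂,x₃)` leave `φ`
invariant and carry the pair `(2,5)` to `(3,6)`, `(5,2)` and `(6,3)`. Monotonicity of `φ` in `xᵢ`
follows, since `∂φ/∂xᵢ ≥ 0` along the whole ray `x + t mᵢ`.
-/

open Function

lemma phi_swap_snd_thd (a b c d e f : ℝ) : phi a b c d e f = phi a c b d f e := by
  unfold phi
  rw [mul_comm √(2 * a * c * e + a ^ 2 + c ^ 2 + e ^ 2 - 1)]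
  ring_nf

lemma phi_swap_snd_fifth (a b c d e f : ℝ) : phi a b c d e f = phi a e f d b c := by
  unfold phi
  rw [mul_comm √(2 * a * e * c + a ^ 2 + e ^ 2 + c ^ 2 - 1)]
  ring_nf

lemma radicand_pos {p q r : ℝ} (hp : 1 ≤ p) (hq : 1 ≤ q) (hr : 0 ≤ r) :
    0 < 2 * p * q * r + p ^ 2 + q ^ 2 + r ^ 2 - 1 := by
  have : 0 ≤ p * q * r := by positivity
  nlinarith

def phiDerivSndNum (a b c d e f : ℝ) : ℝ :=
  (a ^ 2 - 1) * (c * (1 - f ^ 2) + a * e + b * e * f + d * b + a * d * f)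

lemma phiDerivSndNum_mono {a b c d e f t s : ℝ} (ha : 1 ≤ a) (hb : 0 ≤ b) (hd : 0 ≤ d)
    (he : 0 ≤ e) (hf : 0 ≤ f) (ht : 0 ≤ t) (hs : 0 ≤ s) :
    phiDerivSndNum a b c d e f ≤ phiDerivSndNum a (b + t) c d (e + s) f := by
  have hgap : phiDerivSndNum a (b + t) c d (e + s) f - phiDerivSndNum a b c d e f
      = (a ^ 2 - 1) * (a * s + f * (b * s + t * e + t * s) + d * t) := by
    unfold phiDerivSndNum
    ring
  have ha2 : 0 ≤ a ^ 2 - 1 := by nlinarith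
  have ha0 : 0 ≤ a := by linarith
  nlinarith [mul_nonneg ha2 (by positivity : 0 ≤ a * s + f * (b * s + t * e + t * s) + d * t)]

lemma hasDerivAt_phi_snd {a b c d e f : ℝ} (hA : 0 < 2 * a * b * f + a ^ 2 + b ^ 2 + f ^ 2 - 1)
    (hB : 0 < 2 * a * c * e + a ^ 2 + c ^ 2 + e ^ 2 - 1) :
    HasDerivAt (fun u => phi a u c d e f)
      (phiDerivSndNum a b c d e f / (√(2 * a * b * f + a ^ 2 + b ^ 2 + f ^ 2 - 1) ^ 3 *
        √(2 * a * c * e + a ^ 2 + c ^ 2 + e ^ 2 - 1))) b := by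
  have hu := hasDerivAt_id' b
  have hN : HasDerivAt (fun u => u * c + e * f + a * u * e + a * c * f - a ^ 2 * d + d)
      (1 * c + a * 1 * e) b :=
    ((((hu.mul_const c).add_const _).add ((hu.const_mul a).mul_const e)).add_const _
      |>.sub_const _).add_const _
  have hA' : HasDerivAt (fun u => 2 * a * u * f + a ^ 2 + u ^ 2 + f ^ 2 - 1)
      (2 * a * 1 * f + 2 * b) b := by
    refine (((((hu.const_mul (2 * a)).mul_const f).add_const _).add (hu.pow 2)).add_const _
      |>.sub_const _).congr_deriv ?_
    simp
  refine (hN.div ((hA'.sqrt hA.ne').mul_const √(2 * a * c * e + a ^ 2 + c ^ 2 + e ^ 2 - 1))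
    (by positivity)).congr_deriv ?_
  set A := 2 * a * b * f + a ^ 2 + b ^ 2 + f ^ 2 - 1
  set B := 2 * a * c * e + a ^ 2 + c ^ 2 + e ^ 2 - 1
  have hsA : √A ^ 2 = 2 * a * b * f + a ^ 2 + b ^ 2 + f ^ 2 - 1 := Real.sq_sqrt hA.le
  have : 0 < √A := Real.sqrt_pos.2 hA
  have : 0 < √B := Real.sqrt_pos.2 hB
  unfold phiDerivSndNum
  field_simp
  linear_combination (c + a * e) * hsA

lemma hasDerivAt_phiV_update_one {z : Fin 6 → ℝ} (hz : ∀ j, 1 ≤ z j) :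
    HasDerivAt (fun u => phiV (update z 1 u))
      (phiDerivSndNum (z 0) (z 1) (z 2) (z 3) (z 4) (z 5) /
        (√(2 * z 0 * z 1 * z 5 + z 0 ^ 2 + z 1 ^ 2 + z 5 ^ 2 - 1) ^ 3 *
          √(2 * z 0 * z 2 * z 4 + z 0 ^ 2 + z 2 ^ 2 + z 4 ^ 2 - 1))) (z 1) :=
  hasDerivAt_phi_snd (radicand_pos (hz 0) (hz 1) (zero_le_one.trans (hz 5)))
    (radicand_pos (hz 0) (hz 2) (zero_le_one.trans (hz 4)))

lemma pphi_one_nonneg_iff {z : Fin 6 → ℝ} (hz : ∀ j, 1 ≤ z j) :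
    0 ≤ pphi 1 z ↔ 0 ≤ phiDerivSndNum (z 0) (z 1) (z 2) (z 3) (z 4) (z 5) := by
  have hA := radicand_pos (hz 0) (hz 1) (zero_le_one.trans (hz 5))
  have hB := radicand_pos (hz 0) (hz 2) (zero_le_one.trans (hz 4))
  rw [pphi, (hasDerivAt_phiV_update_one hz).deriv, le_div_iff₀ (by positivity), zero_mul]

lemma le_add_smul_single_add_smul_single {ι : Type*} [DecidableEq ι] (x : ι → ℝ) (i k : ι)
    {t s : ℝ} (ht : 0 ≤ t) (hs : 0 ≤ s) : x ≤ x + t • Pi.single i 1 + s • Pi.single k 1 := by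
  have hi : (0 : ι → ℝ) ≤ Pi.single i 1 := Pi.single_nonneg.2 zero_le_one
  have hk : (0 : ι → ℝ) ≤ Pi.single k 1 := Pi.single_nonneg.2 zero_le_one
  rw [add_assoc]
  exact le_add_of_nonneg_right (add_nonneg (smul_nonneg ht hi) (smul_nonneg hs hk))

lemma pphi_one_nonneg_shift {x : Fin 6 → ℝ} (hx : ∀ j, 1 ≤ x j) (hd : 0 ≤ pphi 1 x) {t s : ℝ}
    (ht : 0 ≤ t) (hs : 0 ≤ s) : 0 ≤ pphi 1 (x + t • Pi.single 1 1 + s • Pi.single 4 1) := by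
  have hy j := (hx j).trans (le_add_smul_single_add_smul_single x 1 4 ht hs j)
  have hpos j : 0 ≤ x j := zero_le_one.trans (hx j)
  rw [pphi_one_nonneg_iff hx] at hd
  rw [pphi_one_nonneg_iff hy]
  simpa [Pi.single_apply] using
    hd.trans (phiDerivSndNum_mono (hx 0) (hpos 1) (hpos 3) (hpos 4) (hpos 5) ht hs)

lemma add_smul_single_comp_perm {ι : Type*} [DecidableEq ι] (σ : Equiv.Perm ι) (x : ι → ℝ)
    (j k : ι) (t s : ℝ) :
    (x + t • Pi.single (σ j) 1 + s • Pi.single (σ k) 1) ∘ σ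
      = x ∘ σ + t • Pi.single j 1 + s • Pi.single k 1 := by
  ext m
  simp [Pi.single_apply, σ.injective.eq_iff]

section Symmetry

variable {σ : Equiv.Perm (Fin 6)}

lemma phiV_update_perm (hσ : ∀ z, phiV (z ∘ σ) = phiV z) (x : Fin 6 → ℝ) (j : Fin 6) (u : ℝ) :
    phiV (update x (σ j) u) = phiV (update (x ∘ σ) j u) := by
  rw [← hσ, update_comp_equiv, Equiv.symm_apply_apply]

lemma pphi_perm (hσ : ∀ z, phiV (z ∘ σ) = phiV z) (x : Fin 6 → ℝ) (j : Fin 6) :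
    pphi (σ j) x = pphi j (x ∘ σ) := by
  simp only [pphi, phiV_update_perm hσ]
  rfl

lemma pphi_nonneg_shift_of_perm (hσ : ∀ z, phiV (z ∘ σ) = phiV z) {x : Fin 6 → ℝ}
    (hx : ∀ j, 1 ≤ x j) (hd : 0 ≤ pphi (σ 1) x) {t s : ℝ} (ht : 0 ≤ t) (hs : 0 ≤ s) :
    0 ≤ pphi (σ 1) (x + t • Pi.single (σ 1) 1 + s • Pi.single (σ 4) 1) := by
  rw [pphi_perm hσ] at hd ⊢
  rw [add_smul_single_comp_perm]
  exact pphi_one_nonneg_shift (fun j => hx (σ j)) hd ht hs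

lemma differentiableAt_phiV_update_of_perm (hσ : ∀ z, phiV (z ∘ σ) = phiV z) {z : Fin 6 → ℝ}
    (hz : ∀ j, 1 ≤ z j) : DifferentiableAt ℝ (fun u => phiV (update z (σ 1) u)) (z (σ 1)) := by
  simp only [phiV_update_perm hσ]
  exact (hasDerivAt_phiV_update_one fun j => hz (σ j)).differentiableAt

end Symmetry

lemma exists_perm_of_isPairedIndex {i ih : Fin 6} (h : IsPairedIndex i ih) :
    ∃ σ : Equiv.Perm (Fin 6), (∀ z, phiV (z ∘ σ) = phiV z) ∧ σ 1 = i ∧ σ 4 = ih := by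
  rcases h with ⟨rfl, rfl⟩ | ⟨rfl, rfl⟩ | ⟨rfl, rfl⟩ | ⟨rfl, rfl⟩
  · exact ⟨1, fun z => rfl, rfl, rfl⟩
  · refine ⟨Equiv.swap 1 2 * Equiv.swap 4 5, fun z => ?_, by decide, by decide⟩
    exact (phi_swap_snd_thd ..).symm
  · refine ⟨Equiv.swap 1 4 * Equiv.swap 2 5, fun z => ?_, by decide, by decide⟩
    exact (phi_swap_snd_fifth ..).symm
  · refine ⟨Equiv.swap 1 5 * Equiv.swap 2 4, fun z => ?_, by decide, by decide⟩
    exact ((phi_swap_snd_thd ..).trans (phi_swap_snd_fifth ..)).symm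

lemma phiV_le_of_pphi_nonneg {i : Fin 6} {x y : Fin 6 → ℝ} (hx : ∀ j, 1 ≤ x j)
    (hdiff : ∀ z : Fin 6 → ℝ, (∀ j, 1 ≤ z j) →
      DifferentiableAt ℝ (fun u => phiV (update z i u)) (z i))
    (hnn : ∀ t : ℝ, 0 ≤ t → 0 ≤ pphi i (x + t • Pi.single i 1))
    (hxy : x i ≤ y i) (hy : ∀ j, j ≠ i → y j = x j) : phiV x ≤ phiV y := by
  set f := fun u => phiV (update x i u)
  have hline u : x + (u - x i) • Pi.single i 1 = update x i u := by
    ext j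
    rcases eq_or_ne j i with rfl | h <;> simp [*]
  have hf u (hu : x i ≤ u) : DifferentiableAt ℝ f u ∧ 0 ≤ deriv f u := by
    have hfz : (fun v => phiV (update (update x i u) i v)) = f := by simp [f]
    have hz j : 1 ≤ update x i u j := by
      rcases eq_or_ne j i with rfl | h
      · simpa using (hx j).trans hu
      · simpa [h] using hx j
    have hd := hdiff _ hz
    have hn := hnn (u - x i) (sub_nonneg.2 hu)
    rw [hline, pphi, hfz, update_self] at hn
    rw [hfz, update_self] at hd
    exact ⟨hd, hn⟩
  have hmono : MonotoneOn f (Set.Ici (x i)) := by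
    refine monotoneOn_of_deriv_nonneg (convex_Ici _)
      (fun u hu => (hf u hu).1.continuousAt.continuousWithinAt) (fun u hu => ?_) (fun u hu => ?_)
      <;> rw [interior_Ici] at hu
    · exact (hf u hu.le).1.differentiableWithinAt
    · exact (hf u hu.le).2
  have hyx : y = update x i (y i) := eq_update_iff.2 ⟨rfl, hy⟩
  calc phiV x = f (x i) := by simp [f]
    _ ≤ f (y i) := hmono Set.self_mem_Ici hxy hxy
    _ = phiV y := by rw [hyx]; simp [f]

theorem phi_partial_nonneg_propagates (x : Fin 6 → ℝ) (hx : ∀ j, 1 ≤ x j)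
    (i ih : Fin 6) (hpair : IsPairedIndex i ih) (hd : 0 ≤ pphi i x) :
    (∀ t s : ℝ, 0 ≤ t → 0 ≤ s →
        0 ≤ pphi i (x + t • (Pi.single i 1 : Fin 6 → ℝ) + s • (Pi.single ih 1 : Fin 6 → ℝ))) ∧
      (∀ y : Fin 6 → ℝ, (∀ j, 1 ≤ y j) → x i ≤ y i → (∀ j, j ≠ i → y j = x j) →
        phiV x ≤ phiV y) := by
  obtain ⟨σ, hσ, rfl, rfl⟩ := exists_perm_of_isPairedIndex hpair
  have hprop t s (ht : 0 ≤ t) (hs : 0 ≤ s) := pphi_nonneg_shift_of_perm hσ hx hd ht hs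
  refine ⟨hprop, fun y _ hxy hy => phiV_le_of_pphi_nonneg hx
    (fun z hz => differentiableAt_phiV_update_of_perm hσ hz) (fun t ht => ?_) hxy hy⟩
  simpa using hprop t 0 ht le_rfl
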